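/- arXiv:2401.03608 — 2 statements merged into one kernel-verified Lean document; each statement's English description precedes it below -/
import Mathlib

section
/- Let V be a Banach space, K : V → V a bounded operator with Id + K invertible, and (P_n) a sequence of bounded projections on V with ‖(Id − P_n)K‖ → 0. Then for all sufficiently large n, Id + P_n K is invertible on V, with ‖(Id + P_n K)⁻¹‖ ≤ 2‖(Id + K)⁻¹‖. -/
open Filter ContinuousLinearMap

/-- Let `V` be a Banach space, `K : V → V` bounded with `Id + K` invertible,
and `(P_n)` bounded projections on `V` with `‖(Id − P_n)K‖ → 0`.  Then for all
sufficiently large `n`, `Id + P_n K` is invertible on `V`, with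
`‖(Id + P_n K)⁻¹‖ ≤ 2‖(Id + K)⁻¹‖`. -/
theorem projection_method_invertibility
    {V : Type*} [NormedAddCommGroup V] [NormedSpace ℝ V] [CompleteSpace V]
    (K : V →L[ℝ] V)
    (e : V ≃L[ℝ] V) (he : (e : V →L[ℝ] V) = ContinuousLinearMap.id ℝ V + K)
    (P : ℕ → V →L[ℝ] V) (hproj : ∀ n, P n ∘L P n = P n)
    (hconv : Tendsto (fun n => ‖(ContinuousLinearMap.id ℝ V - P n) ∘L K‖) atTop (nhds 0)) :
    ∃ N : ℕ, ∀ n ≥ N, ∃ en : V ≃L[ℝ] V,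
      (en : V →L[ℝ] V) = ContinuousLinearMap.id ℝ V + P n ∘L K ∧
      ‖(en.symm : V →L[ℝ] V)‖ ≤ 2 * ‖(e.symm : V →L[ℝ] V)‖ := by
  set E : V →L[ℝ] V := (e.symm : V →L[ℝ] V) with hE
  have hEnn : (0:ℝ) ≤ ‖E‖ := norm_nonneg _
  set ε : ℝ := (2 * (‖E‖ + 1))⁻¹ with hε
  have hεpos : 0 < ε := by positivity
  have hev : ∀ᶠ n in atTop,
      ‖(ContinuousLinearMap.id ℝ V - P n) ∘L K‖ < ε :=
    hconv.eventually (eventually_lt_nhds hεpos)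
  obtain ⟨N, hN⟩ := hev.exists_forall_of_atTop
  refine ⟨N, fun n hn => ?_⟩
  set D : V →L[ℝ] V := (ContinuousLinearMap.id ℝ V - P n) ∘L K with hD
  have hDsmall : ‖D‖ < ε := hN n hn
  set A : V →L[ℝ] V := E ∘L D with hA
  have hAle : ‖A‖ ≤ 1/2 := by
    have h1 : ‖A‖ ≤ ‖E‖ * ‖D‖ := opNorm_comp_le _ _
    have h2 : ‖E‖ * ‖D‖ ≤ ‖E‖ * ε :=
      mul_le_mul_of_nonneg_left hDsmall.le hEnn
    have h3 : ‖E‖ * ε ≤ 1/2 := by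
      have hpos : (0:ℝ) < 2 * (‖E‖ + 1) := by positivity
      have hεe : ε * (2 * (‖E‖ + 1)) = 1 := inv_mul_cancel₀ (ne_of_gt hpos)
      nlinarith [hεpos.le]
    linarith
  have hAlt : ‖A‖ < 1 := lt_of_le_of_lt hAle (by norm_num)
  -- the unit 1 - A
  set u : (V →L[ℝ] V)ˣ := Units.oneSub A hAlt with hu
  -- e as a unit
  set eu : (V →L[ℝ] V)ˣ := (ContinuousLinearEquiv.unitsEquiv ℝ V).symm e with heu
  have heuval : (eu : V →L[ℝ] V) = (e : V →L[ℝ] V) := rfl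
  have heuinv : ((eu⁻¹ : (V →L[ℝ] V)ˣ) : V →L[ℝ] V) = E := rfl
  set w : (V →L[ℝ] V)ˣ := eu * u with hw
  have hwval : (w : V →L[ℝ] V) = ContinuousLinearMap.id ℝ V + P n ∘L K := by
    have : (w : V →L[ℝ] V) = (e : V →L[ℝ] V) ∘L (1 - A) := rfl
    have hcomp : (e : V →L[ℝ] V) ∘L E = ContinuousLinearMap.id ℝ V := by
      ext x; simp [hE]
    have heA : (e : V →L[ℝ] V) ∘L A = D := by
      rw [hA, ← comp_assoc, hcomp, id_comp]
    rw [this, comp_sub]; rw [show ((e : V →L[ℝ] V).comp 1) = (e : V →L[ℝ] V) from mul_one _, heA, he, hD, sub_comp, id_comp]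
    abel
  refine ⟨ContinuousLinearEquiv.unitsEquiv ℝ V w, ?_, ?_⟩
  · ext x
    exact DFunLike.congr_fun hwval x
  · have hsymm : (((ContinuousLinearEquiv.unitsEquiv ℝ V w).symm : V ≃L[ℝ] V) : V →L[ℝ] V)
        = ((w⁻¹ : (V →L[ℝ] V)ˣ) : V →L[ℝ] V) := rfl
    rw [hsymm]
    have hinv : ((w⁻¹ : (V →L[ℝ] V)ˣ) : V →L[ℝ] V)
        = ((u⁻¹ : (V →L[ℝ] V)ˣ) : V →L[ℝ] V) ∘L E := by
      rw [hw, mul_inv_rev]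
      rfl
    rw [hinv]
    have huinv : ‖((u⁻¹ : (V →L[ℝ] V)ˣ) : V →L[ℝ] V)‖ ≤ 2 := by
      have : ((u⁻¹ : (V →L[ℝ] V)ˣ) : V →L[ℝ] V) = ∑' n : ℕ, A ^ n := rfl
      rw [this]
      have hb := tsum_geometric_le_of_norm_lt_one A hAlt
      have h1 : ‖(1 : V →L[ℝ] V)‖ ≤ 1 := norm_id_le
      have h2 : (1 - ‖A‖)⁻¹ ≤ 2 := by
        rw [inv_le_comm₀ (by linarith) (by norm_num)]
        linarith
      linarith
    calc ‖((u⁻¹ : (V →L[ℝ] V)ˣ) : V →L[ℝ] V) ∘L E‖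
        ≤ ‖((u⁻¹ : (V →L[ℝ] V)ˣ) : V →L[ℝ] V)‖ * ‖E‖ := opNorm_comp_le _ _
      _ ≤ 2 * ‖E‖ := mul_le_mul_of_nonneg_right huinv hEnn
end

section
/- Let V be a Banach space, K : V → V bounded with Id + K invertible, and P_n bounded projections with ‖(Id − P_n)K‖ → 0. If (Id + K)u = f and (Id + P_n K)u_n = P_n f with u_n ∈ ran P_n, then there exist constants c, C > 0 such that for all sufficiently large n, c‖u − P_n u‖ ≤ ‖u − u_n‖ ≤ C‖u − P_n u‖. -/
open Filter ContinuousLinearMap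

/-- Let `V` be a Banach space, `K : V → V` bounded with `Id + K` invertible,
and `P_n` bounded projections with `‖(Id − P_n)K‖ → 0`.  If `(Id + K)u = f` and
`(Id + P_n K)u_n = P_n f` with `u_n ∈ ran P_n`, then there exist constants `c, C > 0`
such that for all sufficiently large `n`, `c‖u − P_n u‖ ≤ ‖u − u_n‖ ≤ C‖u − P_n u‖`. -/
theorem projection_method_error_bounds
    {V : Type*} [NormedAddCommGroup V] [NormedSpace ℝ V] [CompleteSpace V]
    (K : V →L[ℝ] V)
    (e : V ≃L[ℝ] V) (he : (e : V →L[ℝ] V) = ContinuousLinearMap.id ℝ V + K)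
    (P : ℕ → V →L[ℝ] V) (hproj : ∀ n, P n ∘L P n = P n)
    (hconv : Tendsto (fun n => ‖(ContinuousLinearMap.id ℝ V - P n) ∘L K‖) atTop (nhds 0))
    (u f : V) (hu : u + K u = f)
    (un : ℕ → V) (hrange : ∀ n, un n ∈ Set.range (P n))
    (hun : ∀ n, un n + P n (K (un n)) = P n f) :
    ∃ c C : ℝ, 0 < c ∧ 0 < C ∧ ∃ N : ℕ, ∀ n ≥ N,
      c * ‖u - P n u‖ ≤ ‖u - un n‖ ∧ ‖u - un n‖ ≤ C * ‖u - P n u‖ := by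
  set M : ℝ := ‖(e.symm : V →L[ℝ] V)‖ with hM
  have hM0 : 0 ≤ M := norm_nonneg _
  have hK0 : 0 ≤ ‖K‖ := norm_nonneg _
  refine ⟨(2 + ‖K‖)⁻¹, 2 * M + 1, by positivity, by positivity, ?_⟩
  -- key algebraic identity: (I + Pₙ K)(u - uₙ) = u - Pₙ u
  have key : ∀ n, (u - un n) + P n (K (u - un n)) = u - P n u := by
    intro n
    have h1 : un n + P n (K (un n)) = P n u + P n (K u) := by
      rw [hun n, ← hu, map_add]
    have h2 : P n u = un n + P n (K (un n)) - P n (K u) := by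
      rw [eq_sub_iff_add_eq]; exact h1.symm
    rw [map_sub K u (un n), map_sub (P n), h2]; abel
  have key3 : ∀ n, u - un n
      = e.symm ((u - P n u) + (K (u - un n) - P n (K (u - un n)))) := by
    intro n
    have key2 : (e : V →L[ℝ] V) (u - un n)
        = (u - P n u) + (K (u - un n) - P n (K (u - un n))) := by
      rw [he]
      simp only [ContinuousLinearMap.add_apply, ContinuousLinearMap.id_apply]
      rw [← key n]; abel
    rw [← key2]
    exact (e.symm_apply_apply _).symm
  set ε : ℝ := min 1 (1 / (2 * (M + 1))) with hε
  have hεpos : 0 < ε := by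
    apply lt_min one_pos; positivity
  obtain ⟨N, hN⟩ := (Metric.tendsto_atTop.mp hconv) ε hεpos
  refine ⟨N, fun n hn => ?_⟩
  set x := u - un n with hx
  have hDn : ‖(ContinuousLinearMap.id ℝ V - P n) ∘L K‖ < ε := by
    have := hN n hn
    rwa [Real.dist_eq, sub_zero, abs_of_nonneg (norm_nonneg _)] at this
  have happ : ∀ y : V, ((ContinuousLinearMap.id ℝ V - P n) ∘L K) y
      = K y - P n (K y) := by
    intro y
    simp [ContinuousLinearMap.comp_apply, ContinuousLinearMap.sub_apply]
  -- bound on ‖K x - Pₙ (K x)‖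
  have hb : ‖K x - P n (K x)‖ ≤ ε * ‖x‖ := by
    rw [← happ x]
    exact le_trans (le_opNorm _ _) (by
      have := hDn.le
      exact mul_le_mul_of_nonneg_right this (norm_nonneg _))
  constructor
  · -- lower bound
    have h1 : ‖u - P n u‖ ≤ (2 + ‖K‖) * ‖x‖ := by
      have := key n
      rw [← hx] at this
      calc ‖u - P n u‖ = ‖x + P n (K x)‖ := by rw [this]
        _ ≤ ‖x‖ + ‖P n (K x)‖ := norm_add_le _ _
        _ = ‖x‖ + ‖K x - (K x - P n (K x))‖ := by rw [sub_sub_cancel]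
        _ ≤ ‖x‖ + (‖K x‖ + ‖K x - P n (K x)‖) := by
            gcongr; exact norm_sub_le _ _
        _ ≤ ‖x‖ + (‖K‖ * ‖x‖ + ε * ‖x‖) :=
            add_le_add le_rfl (add_le_add (le_opNorm _ _) hb)
        _ ≤ ‖x‖ + (‖K‖ * ‖x‖ + 1 * ‖x‖) := by
            gcongr
            exact min_le_left _ _
        _ = (2 + ‖K‖) * ‖x‖ := by ring
    rw [inv_mul_le_iff₀ (by positivity)]
    nlinarith [h1]
  · -- upper bound
    have h2 : ‖x‖ ≤ M * (‖u - P n u‖ + ε * ‖x‖) := by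
      calc ‖x‖ = ‖e.symm ((u - P n u) + (K x - P n (K x)))‖ :=
            congrArg norm (key3 n)
        _ ≤ M * ‖(u - P n u) + (K x - P n (K x))‖ := by
            rw [hM]
            exact (e.symm : V →L[ℝ] V).le_opNorm _
        _ ≤ M * (‖u - P n u‖ + ‖K x - P n (K x)‖) := by
            gcongr; exact norm_add_le _ _
        _ ≤ M * (‖u - P n u‖ + ε * ‖x‖) := by gcongr
    have hMε : M * ε ≤ 1 / 2 := by
      have h3 : ε ≤ 1 / (2 * (M + 1)) := min_le_right _ _
      have h4 : M * ε ≤ M * (1 / (2 * (M + 1))) :=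
        mul_le_mul_of_nonneg_left h3 hM0
      calc M * ε ≤ M * (1 / (2 * (M + 1))) := h4
        _ = M / (2 * (M + 1)) := by ring
        _ ≤ 1 / 2 := by
          rw [div_le_div_iff₀ (by positivity) (by norm_num)]
          nlinarith
    have hx0 : 0 ≤ ‖x‖ := norm_nonneg _
    have hεx : 0 ≤ ε := hεpos.le
    nlinarith [norm_nonneg (u - P n u)]
end
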